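/- Let n ≥ 1 be an integer and w an even integer, and let μ_1 ≥ μ_2 ≥ ⋯ ≥ μ_{n+1} be integers satisfying μ_i + μ_{n+2−i} = w for all 1 ≤ i ≤ n+1. Then there exist integers ν_1 ≥ ν_2 ≥ ⋯ ≥ ν_n satisfying ν_i + ν_{n+1−i} = −w for all 1 ≤ i ≤ n and −μ_{n+2−i} ≥ ν_i ≥ −μ_{n+1−i} for all 1 ≤ i ≤ n. -/

import Mathlib

/-!
Pass to the dual tuple `a i = -μ (n + 2 - i)`, which is again dominant and pure, of weight `-w`;
the required `ν` must then satisfy `a (i + 1) ≤ ν i ≤ a i`. Take `ν i = a i` on the first half and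
`ν i = a (i + 1)` on the second half: purity of `a` pairs these values to sum to `-w`. When `n` is
odd the middle entry `ν ((n + 1) / 2)` is paired with itself, so it must be `-w / 2`; this lies
between its bounds `a ((n + 3) / 2) ≤ a ((n + 1) / 2)` because they sum to `-w`.
-/

namespace Tuple

/- A tuple of length `m` is a function `ℕ → ℤ` read on the indices `1, …, m`. -/

def IsDominant (m : ℕ) (a : ℕ → ℤ) : Prop :=
  ∀ i, 1 ≤ i → i < m → a (i + 1) ≤ a i

def IsPure (m : ℕ) (v : ℤ) (a : ℕ → ℤ) : Prop :=
  ∀ i, 1 ≤ i → i ≤ m → a i + a (m + 1 - i) = v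

def dual (m : ℕ) (a : ℕ → ℤ) (i : ℕ) : ℤ :=
  -a (m + 1 - i)

def Interlaces (m : ℕ) (b a : ℕ → ℤ) : Prop :=
  ∀ i, 1 ≤ i → i ≤ m → a (i + 1) ≤ b i ∧ b i ≤ a i

variable {m : ℕ} {v c : ℤ} {a b : ℕ → ℤ}

lemma IsDominant.dual (h : IsDominant m a) : IsDominant m (dual m a) := by
  intro i h1 h2
  have := h (m - i) (by omega) (by omega)
  simp only [Tuple.dual, neg_le_neg_iff]
  rwa [show m + 1 - (i + 1) = m - i by omega, show m + 1 - i = m - i + 1 by omega]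

lemma IsPure.dual (h : IsPure m v a) : IsPure m (-v) (dual m a) := by
  intro i h1 h2
  have := h (m + 1 - i) (by omega) (by omega)
  rw [show m + 1 - (m + 1 - i) = i by omega] at this
  simp only [Tuple.dual, show m + 1 - (m + 1 - i) = i by omega]
  omega

lemma Interlaces.isDominant (h : Interlaces m b a) : IsDominant m b := by
  intro i h1 h2
  exact (h (i + 1) (by omega) h2).2.trans (h i h1 h2.le).1

def pureInterlacing (m : ℕ) (c : ℤ) (a : ℕ → ℤ) (i : ℕ) : ℤ :=
  if 2 * i ≤ m then a i else if 2 * i = m + 1 then c else a (i + 1)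

lemma interlaces_pureInterlacing (ha : IsDominant (m + 1) a) (hp : IsPure (m + 1) (c + c) a) :
    Interlaces m (pureInterlacing m c a) a := by
  intro i h1 h2
  have hd := ha i h1 (by omega)
  unfold pureInterlacing
  split_ifs with hle hmid
  · exact ⟨hd, le_rfl⟩
  · have := hp i h1 (by omega)
    rw [show m + 1 + 1 - i = i + 1 by omega] at this
    omega
  · exact ⟨le_rfl, hd⟩

lemma isPure_pureInterlacing (hp : IsPure (m + 1) (c + c) a) :
    IsPure m (c + c) (pureInterlacing m c a) := by
  intro i h1 h2
  have hi := hp i h1 (by omega)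
  have hi' := hp (i + 1) (by omega) (by omega)
  rw [show m + 1 + 1 - i = m + 1 - i + 1 by omega] at hi
  rw [show m + 1 + 1 - (i + 1) = m + 1 - i by omega] at hi'
  unfold pureInterlacing
  split_ifs <;> omega

theorem exists_isPure_interlaces (ha : IsDominant (m + 1) a) (hp : IsPure (m + 1) v a)
    (hv : Even v) : ∃ b, IsDominant m b ∧ IsPure m v b ∧ Interlaces m b a := by
  obtain ⟨c, rfl⟩ := hv
  have hb := interlaces_pureInterlacing ha hp
  exact ⟨_, hb.isDominant, isPure_pureInterlacing hp, hb⟩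

end Tuple

open Tuple in
theorem stmt_14_general (n : ℕ) (w : ℤ) (hw : Even w) (μ : ℕ → ℤ)
    (hdom : ∀ i, 1 ≤ i → i ≤ n → μ (i + 1) ≤ μ i)
    (hpure : ∀ i, 1 ≤ i → i ≤ n + 1 → μ i + μ (n + 2 - i) = w) :
    ∃ ν : ℕ → ℤ,
      (∀ i, 1 ≤ i → i < n → ν (i + 1) ≤ ν i) ∧
      (∀ i, 1 ≤ i → i ≤ n → ν i + ν (n + 1 - i) = -w) ∧
      (∀ i, 1 ≤ i → i ≤ n → ν i ≤ -μ (n + 2 - i) ∧ -μ (n + 1 - i) ≤ ν i) := by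
  have hμdom : IsDominant (n + 1) μ := fun i h1 h2 => hdom i h1 (by omega)
  have hμpure : IsPure (n + 1) w μ := hpure
  obtain ⟨ν, hνdom, hνpure, hνint⟩ :=
    exists_isPure_interlaces hμdom.dual hμpure.dual hw.neg
  refine ⟨ν, hνdom, hνpure, fun i h1 h2 => ?_⟩
  have := hνint i h1 h2
  simp only [Tuple.dual, show n + 1 + 1 - (i + 1) = n + 1 - i by omega] at this
  exact ⟨this.2, this.1⟩

/-- Per-embedding core of the totally real case of Lemma 7.2: a dominant
tuple `μ` of length `n + 1` pure of even weight `w` admits a dominant tuple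
`ν` of length `n` pure of weight `-w` interlacing the dual of `μ` with
shift 0. -/
theorem stmt_14 (n : ℕ) (hn : 1 ≤ n) (w : ℤ) (hw : Even w) (μ : ℕ → ℤ)
    (hdom : ∀ i, 1 ≤ i → i ≤ n → μ (i + 1) ≤ μ i)
    (hpure : ∀ i, 1 ≤ i → i ≤ n + 1 → μ i + μ (n + 2 - i) = w) :
    ∃ ν : ℕ → ℤ,
      (∀ i, 1 ≤ i → i < n → ν (i + 1) ≤ ν i) ∧
      (∀ i, 1 ≤ i → i ≤ n → ν i + ν (n + 1 - i) = -w) ∧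
      (∀ i, 1 ≤ i → i ≤ n → ν i ≤ -μ (n + 2 - i) ∧ -μ (n + 1 - i) ≤ ν i) :=
  stmt_14_general n w hw μ hdom hpure
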